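/- Let G be a graph and v a vertex of G of degree d ≤ 4. Then Γ(G−v) ≤ Γ(G), where Γ(H) = |V(H)|/12 + Φ(H)/36 + tc(H)/18, Φ(H) = Σ_{w∈V(H)}(deg_H(w) − 5), and tc(H) is the number of tree components of H. -/

import Mathlib

/-- `Φ(G) = Σ_{v ∈ V} (deg v - 5)`. -/
noncomputable def Phi {V : Type*} [Fintype V] (G : SimpleGraph V) : ℤ :=
  ∑ v : V, ((Nat.card (G.neighborSet v) : ℤ) - 5)

/-- The number of tree components of `G`. -/
noncomputable def treeComponents {V : Type*} (G : SimpleGraph V) : ℕ :=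
  Nat.card {c : G.ConnectedComponent // (G.induce c.supp).IsTree}

/-- `Γ(G) = |V|/12 + Φ(G)/36 + tc(G)/18`. -/
noncomputable def Gamma {V : Type*} [Fintype V] (G : SimpleGraph V) : ℝ :=
  (Fintype.card V : ℝ) / 12 + (Phi G : ℝ) / 36 + (treeComponents G : ℝ) / 18

/-!
By the handshake lemma `Φ(H) = 2|E(H)| - 5|V(H)|`, hence `Γ(H) = (|E(H)| - |V(H)| + tc(H)) / 18`.
Deleting a vertex `v` of degree `d` removes one vertex and `d` edges, so it suffices that
`tc(G - v) + 1 ≤ tc(G) + d`.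

A component of `G - v` containing no neighbour of `v` is also a component of `G`, other than the
component of `v`, and it is a tree in both graphs or in neither. Every other component of `G - v`
contains a neighbour of `v`, so there are at most `d` of them. One unit is saved: if the component
of `v` is a tree, it is a tree component of `G` not met by the first kind; otherwise it contains a
cycle, which either passes through `v`, so that two neighbours of `v` share a component of `G - v`,
or avoids `v`, so that some component of the second kind is not a tree.
-/

open Finset

lemma Set.ncard_range_lt_of_not_injective {α β : Type*} [Finite α] {f : α → β}
    (hf : ¬ f.Injective) : (Set.range f).ncard < Nat.card α := by
  rw [← Set.image_univ, ← Set.ncard_univ]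
  exact lt_of_le_of_ne Set.ncard_image_le fun h =>
    hf (Set.injOn_univ.mp (Set.injOn_of_ncard_image_eq h))

namespace SimpleGraph

variable {V : Type*} {G : SimpleGraph V}

lemma Walk.isCycle_induce_iff {s : Set V} {u : V} (c : G.Walk u u)
    (hc : ∀ x ∈ c.support, x ∈ s) : (c.induce s hc).IsCycle ↔ c.IsCycle := by
  conv_rhs => rw [← c.map_induce hc]
  exact (Walk.isCycle_map_iff_of_injective (Embedding.induce (G := G) s).injective).symm

lemma Walk.reachable_induce_or_exists_adj_notMem {s : Set V} {x y : V} (p : G.Walk x y)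
    (hx : x ∈ s) :
    (∃ hy : y ∈ s, (G.induce s).Reachable ⟨x, hx⟩ ⟨y, hy⟩) ∨
      ∃ a b, ∃ ha : a ∈ s, b ∉ s ∧ G.Adj a b ∧ (G.induce s).Reachable ⟨x, hx⟩ ⟨a, ha⟩ := by
  induction p with
  | nil => exact .inl ⟨hx, .rfl⟩
  | @cons x x' y h p ih =>
    by_cases hx' : x' ∈ s
    · have hxx' : (G.induce s).Reachable ⟨x, hx⟩ ⟨x', hx'⟩ := (induce_adj.2 h).reachable
      rcases ih hx' with ⟨hy, hr⟩ | ⟨a, b, ha, hb, hab, hr⟩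
      · exact .inl ⟨hy, hxx'.trans hr⟩
      · exact .inr ⟨a, b, ha, hb, hab, hxx'.trans hr⟩
    · exact .inr ⟨x, x', hx, hx', h, .rfl⟩

lemma Walk.IsCycle.exists_adj_adj_walk_notMem_support {v : V} {c : G.Walk v v}
    (hc : c.IsCycle) :
    ∃ w₁ w₂, G.Adj v w₁ ∧ G.Adj v w₂ ∧ w₁ ≠ w₂ ∧ ∃ r : G.Walk w₁ w₂, v ∉ r.support := by
  cases c with
  | nil => exact absurd rfl hc.ne_nil
  | @cons _ w₂ _ h₂ p =>
    rw [Walk.cons_isCycle_iff] at hc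
    obtain ⟨w₁, h₁, r, hrev⟩ := Walk.exists_eq_cons_of_ne h₂.ne p.reverse
    have hpath : (Walk.cons h₁ r).IsPath := hrev ▸ hc.1.reverse
    rw [Walk.cons_isPath_iff] at hpath
    refine ⟨w₁, w₂, h₁, h₂, ?_, r, hpath.2⟩
    rintro rfl
    have : s(v, w₁) ∈ p.reverse.edges := by rw [hrev]; simp
    exact hc.2 (by simpa using this)

lemma ConnectedComponent.mem_supp_of_mem_support (C : G.ConnectedComponent) {u w : V}
    (p : G.Walk u w) (hu : u ∈ C.supp) {x : V} (hx : x ∈ p.support) : x ∈ C.supp := by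
  classical
  rw [mem_supp_iff] at hu ⊢
  exact hu ▸ (ConnectedComponent.sound (p.takeUntil x hx).reachable).symm

lemma ConnectedComponent.isTree_induce_supp_iff (C : G.ConnectedComponent) :
    (G.induce C.supp).IsTree ↔ ∀ u ∈ C.supp, ∀ c : G.Walk u u, ¬ c.IsCycle := by
  have hconn : (G.induce C.supp).Connected := C.connected_toSimpleGraph
  rw [isTree_iff, and_iff_right hconn]
  constructor
  · intro hacyc u hu c hc
    exact hacyc _ ((c.isCycle_induce_iff fun _ => C.mem_supp_of_mem_support c hu).mpr hc)
  · rintro h ⟨u, hu⟩ c hc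
    exact h u hu (c.map (Embedding.induce C.supp).toHom)
      (hc.map (Embedding.induce (G := G) C.supp).injective)

variable (G) in
def treeComponentSet : Set G.ConnectedComponent := {C | (G.induce C.supp).IsTree}

variable (G) (v : V)

def componentOfNeighbor (w : G.neighborSet v) : (G.induce {w | w ≠ v}).ConnectedComponent :=
  (G.induce {w | w ≠ v}).connectedComponentMk ⟨w, w.2.ne'⟩

variable {G v}

lemma mk_eq_or_mem_range_componentOfNeighbor {x : {w | w ≠ v}} {y : V} (h : G.Reachable x y) :
    (∃ hy : y ≠ v, (G.induce {w | w ≠ v}).connectedComponentMk ⟨y, hy⟩ =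
        (G.induce {w | w ≠ v}).connectedComponentMk x) ∨
      (G.induce {w | w ≠ v}).connectedComponentMk x ∈ Set.range (componentOfNeighbor G v) := by
  obtain ⟨p⟩ := h
  rcases p.reachable_induce_or_exists_adj_notMem x.2 with ⟨hy, hr⟩ | ⟨a, b, ha, hb, hab, hr⟩
  · exact .inl ⟨hy, (ConnectedComponent.sound hr).symm⟩
  · obtain rfl : b = v := not_not.mp hb
    exact .inr ⟨⟨a, hab.symm⟩, (ConnectedComponent.sound hr).symm⟩

lemma mk_eq_of_reachable_of_notMem_range {C : (G.induce {w | w ≠ v}).ConnectedComponent}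
    (hC : C ∉ Set.range (componentOfNeighbor G v)) {x : {w | w ≠ v}}
    (hx : (G.induce {w | w ≠ v}).connectedComponentMk x = C) {y : V} (h : G.Reachable x y) :
    ∃ hy : y ≠ v, (G.induce {w | w ≠ v}).connectedComponentMk ⟨y, hy⟩ = C := by
  subst hx
  exact (mk_eq_or_mem_range_componentOfNeighbor h).resolve_right hC

lemma ncard_treeComponentSet_diff_range_le [Finite V] :
    ((G.induce {w | w ≠ v}).treeComponentSet \ Set.range (componentOfNeighbor G v)).ncard ≤
      (G.treeComponentSet \ {G.connectedComponentMk v}).ncard := by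
  set G' := G.induce {w | w ≠ v}
  refine Set.ncard_le_ncard_of_injOn (ConnectedComponent.map (Embedding.induce _).toHom) ?_ ?_
  · rintro C ⟨hC, hCK⟩
    induction C using ConnectedComponent.ind with | h x => ?_
    have hreach {z : V} (hz : z ∈ (G.connectedComponentMk x).supp) :
        ∃ hz : z ≠ v, G'.connectedComponentMk ⟨z, hz⟩ = G'.connectedComponentMk x :=
      mk_eq_of_reachable_of_notMem_range hCK rfl (ConnectedComponent.exact hz).symm
    rw [ConnectedComponent.map_mk]
    refine ⟨?_, fun hxv => ?_⟩
    · rw [treeComponentSet, Set.mem_ofPred_eq, ConnectedComponent.isTree_induce_supp_iff] at hC ⊢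
      intro u hu c hc
      have hc' : ∀ z ∈ c.support, z ∈ {w | w ≠ v} := fun z hz =>
        (hreach (ConnectedComponent.mem_supp_of_mem_support _ c hu hz)).1
      exact hC _ (hreach hu).2 (c.induce {w | w ≠ v} hc') ((c.isCycle_induce_iff hc').mpr hc)
    · exact (hreach (Set.mem_singleton_iff.mp hxv).symm).1 rfl
  · rintro C₁ ⟨-, hC₁⟩ C₂ - h
    induction C₁ using ConnectedComponent.ind with | h x₁ => ?_
    induction C₂ using ConnectedComponent.ind with | h x₂ => ?_
    simp only [ConnectedComponent.map_mk] at h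
    exact (mk_eq_of_reachable_of_notMem_range hC₁ rfl (ConnectedComponent.exact h)).2.symm

lemma exists_notMem_treeComponentSet_or_not_injective
    (h : G.connectedComponentMk v ∉ G.treeComponentSet) :
    (∃ C ∈ Set.range (componentOfNeighbor G v), C ∉ (G.induce {w | w ≠ v}).treeComponentSet) ∨
      ¬ (componentOfNeighbor G v).Injective := by
  classical
  simp only [treeComponentSet, Set.mem_ofPred_eq, ConnectedComponent.isTree_induce_supp_iff,
    not_forall, not_not] at h ⊢
  obtain ⟨u, hu, c, hc⟩ := h
  by_cases hv : v ∈ c.support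
  · obtain ⟨w₁, w₂, h₁, h₂, hne, r, hr⟩ := (hc.rotate hv).exists_adj_adj_walk_notMem_support
    have hr' : ∀ z ∈ r.support, z ∈ {w | w ≠ v} := fun z hz hzv => hr (hzv ▸ hz)
    refine .inr fun hinj => hne (congrArg Subtype.val (@hinj ⟨w₁, h₁⟩ ⟨w₂, h₂⟩ ?_))
    exact ConnectedComponent.sound (r.induce _ hr').reachable
  · have hc' : ∀ z ∈ c.support, z ∈ {w | w ≠ v} := fun z hz hzv => hv (hzv ▸ hz)
    have huv : u ≠ v := hc' u c.start_mem_support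
    refine .inl ⟨_, ?_, ⟨u, huv⟩, rfl, c.induce _ hc', (c.isCycle_induce_iff hc').mpr hc⟩
    exact (mk_eq_or_mem_range_componentOfNeighbor (x := ⟨u, huv⟩)
      (ConnectedComponent.exact hu)).resolve_left fun ⟨hvv, _⟩ => hvv rfl

lemma ncard_treeComponentSet_inter_range_le [Finite V] :
    ((G.induce {w | w ≠ v}).treeComponentSet ∩ Set.range (componentOfNeighbor G v)).ncard ≤
      Nat.card (G.neighborSet v) :=
  (Set.ncard_le_ncard Set.inter_subset_right).trans (Finite.card_range_le _)

lemma ncard_treeComponentSet_inter_range_lt [Finite V]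
    (h : G.connectedComponentMk v ∉ G.treeComponentSet) :
    ((G.induce {w | w ≠ v}).treeComponentSet ∩ Set.range (componentOfNeighbor G v)).ncard <
      Nat.card (G.neighborSet v) := by
  rcases exists_notMem_treeComponentSet_or_not_injective h with ⟨C, hCK, hC⟩ | hinj
  · refine (Set.ncard_lt_ncard ?_).trans_le (Finite.card_range_le (componentOfNeighbor G v))
    exact Set.ssubset_iff_subset_ne.mpr
      ⟨Set.inter_subset_right, fun heq => hC (heq ▸ hCK).1⟩
  · exact (Set.ncard_le_ncard Set.inter_subset_right).trans_lt
      (Set.ncard_range_lt_of_not_injective hinj)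

variable (G v) in
lemma card_edgeFinset_induce_ne_add_degree [Fintype V] [DecidableEq V] [DecidableRel G.Adj] :
    #(G.induce {w | w ≠ v}).edgeFinset + G.degree v = #G.edgeFinset := by
  have h := G.card_edgeFinset_induce_compl_singleton v
  rw [card_edgeFinset_deleteIncidenceSet] at h
  have := G.degree_le_card_edgeFinset v
  show #(G.induce {v}ᶜ).edgeFinset + G.degree v = #G.edgeFinset
  omega

end SimpleGraph

open SimpleGraph

lemma treeComponents_eq_ncard {V : Type*} (G : SimpleGraph V) :
    treeComponents G = G.treeComponentSet.ncard :=
  rfl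

theorem treeComponents_induce_ne_add_one_le {V : Type*} [Finite V] (G : SimpleGraph V) (v : V) :
    treeComponents (G.induce {w | w ≠ v}) + 1 ≤ treeComponents G + Nat.card (G.neighborSet v) := by
  rw [treeComponents_eq_ncard, treeComponents_eq_ncard,
    ← Set.ncard_inter_add_ncard_sdiff_eq_ncard _ (Set.range (componentOfNeighbor G v))]
  have huntouched := ncard_treeComponentSet_diff_range_le (G := G) (v := v)
  by_cases hv : G.connectedComponentMk v ∈ G.treeComponentSet
  · have := Set.ncard_sdiff_singleton_add_one hv
    have := ncard_treeComponentSet_inter_range_le (G := G) (v := v)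
    omega
  · rw [Set.sdiff_singleton_eq_self hv] at huntouched
    have := ncard_treeComponentSet_inter_range_lt hv
    omega

lemma Phi_eq_two_mul_card_edgeFinset_sub {V : Type*} [Fintype V] (G : SimpleGraph V)
    [DecidableRel G.Adj] : Phi G = 2 * #G.edgeFinset - 5 * Fintype.card V := by
  have hdeg (w : V) : Nat.card (G.neighborSet w) = G.degree w := by
    rw [Nat.card_eq_fintype_card, card_neighborSet_eq_degree]
  simp only [Phi, hdeg, Finset.sum_sub_distrib, ← Nat.cast_sum, sum_degrees_eq_twice_card_edges,
    Finset.sum_const, Finset.card_univ]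
  push_cast
  ring

lemma Gamma_eq_card_edgeFinset_sub_card_add_treeComponents_div {V : Type*} [Fintype V]
    (G : SimpleGraph V) [DecidableRel G.Adj] :
    Gamma G = ((#G.edgeFinset : ℝ) - Fintype.card V + treeComponents G) / 18 := by
  rw [Gamma, Phi_eq_two_mul_card_edgeFinset_sub]
  push_cast
  ring

theorem gamma_deleteVertex_le_general {V : Type*} [Fintype V] [DecidableEq V]
    (G : SimpleGraph V) (v : V) :
    Gamma (G.induce {w : V | w ≠ v}) ≤ Gamma G := by
  classical
  have hV : (Fintype.card {w | w ≠ v} : ℝ) + 1 = Fintype.card V := by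
    have := Fintype.card_pos_iff.mpr ⟨v⟩
    rw [Set.card_ne_eq]
    norm_cast
    omega
  have hE : (#(G.induce {w | w ≠ v}).edgeFinset : ℝ) + G.degree v = #G.edgeFinset := by
    exact_mod_cast G.card_edgeFinset_induce_ne_add_degree v
  have htc : (treeComponents (G.induce {w | w ≠ v}) : ℝ) + 1 ≤ treeComponents G + G.degree v := by
    rw [← card_neighborSet_eq_degree, ← Nat.card_eq_fintype_card]
    exact_mod_cast treeComponents_induce_ne_add_one_le G v
  rw [Gamma_eq_card_edgeFinset_sub_card_add_treeComponents_div,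
    Gamma_eq_card_edgeFinset_sub_card_add_treeComponents_div]
  gcongr ?_ / _
  linarith

/-- Deleting a vertex of degree at most 4 does not increase `Γ`. -/
theorem gamma_deleteVertex_le {V : Type*} [Fintype V] [DecidableEq V]
    (G : SimpleGraph V) (v : V) (hdeg : Nat.card (G.neighborSet v) ≤ 4) :
    Gamma (G.induce {w : V | w ≠ v}) ≤ Gamma G :=
  gamma_deleteVertex_le_general G v
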